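/- (Jacobi triple product, shifted form) For r ∈ ℚ with r ≠ 1/2, |q| < 1, z ≠ 0: ∑_{m ∈ ℤ+r} q^{m²/2} z^m = z^r q^{r²/2} ∏_{m>0} (1 - q^m)(1 + z q^{m+r-1/2})(1 + z^{-1} q^{m-r-1/2}), provided both sides converge absolutely (e.g. −1/2 < r < 1/2). -/

import Mathlib

/-!
Put `q = p ^ 2`. The `q`-binomial theorem at `x = u * p ^ (1 - 2 * n)` gives the finite identity
`∏_{i < n} (1 + u p^(2i+1)) (1 + u⁻¹ p^(2i+1)) = ∑_{|j| ≤ n} [2n choose n+j]_q p^(j²) u^j`.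
As `n → ∞` each Gaussian binomial `[2n choose n+j]_q` tends to `1 / ∏_{m ≥ 1} (1 - q^m)` while
staying uniformly bounded, so by Tannery's theorem the right side tends to the theta series
divided by `∏ (1 - q^m)`. The shifted form is this identity at `p = e^(πiτ)`, `u = e^(2πi(σ + rτ))`.
-/

open Finset Filter Topology

lemma prod_range_pow_two_mul_add_one {M : Type*} [CommMonoid M] (p : M) (n : ℕ) :
    ∏ j ∈ range n, p ^ (2 * j + 1) = p ^ (n ^ 2) := by
  induction n with
  | zero => simp
  | succ n ih => rw [prod_range_succ, ih, ← pow_add]; ring_nf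

lemma two_mul_choose_two (k : ℕ) : 2 * (k.choose 2 : ℤ) = k ^ 2 - k := by
  have h : ((2 * (k.choose 2 : ℤ) : ℤ) : ℚ) = ((k ^ 2 - k : ℤ) : ℚ) := by
    push_cast [Nat.cast_choose_two]; ring
  exact_mod_cast h

section CommRing

variable {R : Type*} [CommRing R]

def qPochhammer (q : R) (n : ℕ) : R := ∏ i ∈ range n, (1 - q ^ (i + 1))

lemma qPochhammer_zero (q : R) : qPochhammer q 0 = 1 :=
  prod_range_zero _

lemma qPochhammer_succ (q : R) (n : ℕ) :
    qPochhammer q (n + 1) = qPochhammer q n * (1 - q ^ (n + 1)) :=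
  prod_range_succ _ n

end CommRing

section Field

variable {K : Type*} [Field K] {q : K}

lemma qPochhammer_ne_zero (hq : ∀ n : ℕ, q ^ (n + 1) ≠ 1) (n : ℕ) : qPochhammer q n ≠ 0 :=
  prod_ne_zero_iff.2 fun i _ => sub_ne_zero.2 (hq i).symm

/-- `[n choose k]_q`; the value `0` for `k > n` makes the `q`-Pascal rule hold for all `k`. -/
def gaussBinom (q : K) (n k : ℕ) : K :=
  if k ≤ n then qPochhammer q n / (qPochhammer q k * qPochhammer q (n - k)) else 0

lemma gaussBinom_of_lt {n k : ℕ} (h : n < k) : gaussBinom q n k = 0 :=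
  if_neg h.not_ge

lemma gaussBinom_zero_right (hq : ∀ n : ℕ, q ^ (n + 1) ≠ 1) (n : ℕ) : gaussBinom q n 0 = 1 := by
  simp [gaussBinom, qPochhammer_zero, qPochhammer_ne_zero hq]

lemma gaussBinom_self (hq : ∀ n : ℕ, q ^ (n + 1) ≠ 1) (n : ℕ) : gaussBinom q n n = 1 := by
  simp [gaussBinom, qPochhammer_zero, qPochhammer_ne_zero hq]

lemma gaussBinom_succ_succ (hq : ∀ n : ℕ, q ^ (n + 1) ≠ 1) (n k : ℕ) :
    gaussBinom q (n + 1) (k + 1) = gaussBinom q n k + q ^ (k + 1) * gaussBinom q n (k + 1) := by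
  rcases lt_trichotomy k n with hkn | rfl | hnk
  · obtain ⟨m, rfl⟩ := Nat.exists_eq_add_of_lt hkn
    simp only [gaussBinom, if_pos (by omega : k + 1 ≤ k + m + 1 + 1),
      if_pos (by omega : k ≤ k + m + 1), if_pos (by omega : k + 1 ≤ k + m + 1), show k + m + 1 + 1 - (k + 1) = m + 1 by omega,
      show k + m + 1 - k = m + 1 by omega, show k + m + 1 - (k + 1) = m by omega,
      qPochhammer_succ q (k + m + 1), qPochhammer_succ q k, qPochhammer_succ q m]
    have hk := sub_ne_zero.2 (hq k).symm
    have hm := sub_ne_zero.2 (hq m).symm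
    field_simp
    ring
  · rw [gaussBinom_self hq, gaussBinom_self hq, gaussBinom_of_lt k.lt_succ_self, mul_zero, add_zero]
  · rw [gaussBinom_of_lt (by omega), gaussBinom_of_lt hnk, gaussBinom_of_lt (by omega), mul_zero,
      add_zero]

theorem prod_one_add_mul_pow_eq_sum_gaussBinom (hq : ∀ n : ℕ, q ^ (n + 1) ≠ 1) (x : K) (N : ℕ) :
    ∏ j ∈ range N, (1 + x * q ^ j) =
      ∑ k ∈ range (N + 1), q ^ k.choose 2 * gaussBinom q N k * x ^ k := by
  induction N generalizing x with
  | zero => simp [gaussBinom_self hq]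
  | succ N ih =>
    have hchoose (k : ℕ) : (k + 1).choose 2 = k.choose 2 + k := by
      rw [Nat.choose_succ_succ', Nat.choose_one_right, add_comm]
    set S := ∑ k ∈ range (N + 1), q ^ k.choose 2 * gaussBinom q N k * (x * q) ^ k
    -- peeling off the factor `1 + x` turns `x` into `x * q`
    have hprod : ∏ j ∈ range (N + 1), (1 + x * q ^ j) = (1 + x) * S := by
      rw [prod_range_succ', mul_comm, pow_zero, mul_one]
      exact congrArg _ ((prod_congr rfl fun k _ => by ring).trans (ih (x * q)))
    have hS : S = ∑ k ∈ range (N + 1),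
        q ^ (k + 1).choose 2 * (q ^ (k + 1) * gaussBinom q N (k + 1)) * x ^ (k + 1) + 1 := by
      have htop : S = ∑ k ∈ range (N + 2), q ^ k.choose 2 * gaussBinom q N k * (x * q) ^ k := by
        rw [sum_range_succ _ (N + 1), gaussBinom_of_lt N.lt_succ_self, mul_zero, zero_mul, add_zero]
      rw [htop, sum_range_succ', gaussBinom_zero_right hq]
      simp only [mul_pow, Nat.choose_zero_succ, pow_zero, mul_one]
      exact congrArg (· + 1) (sum_congr rfl fun k _ => by ring)
    have hxS :
        x * S = ∑ k ∈ range (N + 1), q ^ (k + 1).choose 2 * gaussBinom q N k * x ^ (k + 1) := by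
      rw [mul_sum]
      refine sum_congr rfl fun k _ => ?_
      rw [hchoose]
      ring
    rw [hprod, add_mul, one_mul, hxS, hS, sum_range_succ' _ (N + 1)]
    simp only [gaussBinom_succ_succ hq, gaussBinom_zero_right hq, mul_add, add_mul,
      sum_add_distrib, Nat.choose_zero_succ, pow_zero, mul_one]
    ring

theorem jacobi_triple_product_finite {p u : K} (hp : p ≠ 0) (hp2 : ∀ n : ℕ, (p ^ 2) ^ (n + 1) ≠ 1)
    (hu : u ≠ 0) (n : ℕ) :
    ∏ i ∈ range n, ((1 + u * p ^ (2 * i + 1)) * (1 + u⁻¹ * p ^ (2 * i + 1))) =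
      ∑ k ∈ range (2 * n + 1),
        gaussBinom (p ^ 2) (2 * n) k * (p ^ (((k : ℤ) - n) ^ 2) * u ^ ((k : ℤ) - n)) := by
  -- the `q`-binomial theorem at `q = p ^ 2`, `x = u * p ^ (1 - 2 * n)`, multiplied by `p ^ n ^ 2`
  set x := u * p ^ (1 - 2 * n : ℤ)
  have hupper (i : ℕ) : 1 + x * (p ^ 2) ^ (n + i) = 1 + u * p ^ (2 * i + 1) := by
    simp only [x, mul_assoc, ← zpow_natCast, ← zpow_mul, ← zpow_add₀ hp]
    congr 3
    push_cast
    ring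
  have hlower (i : ℕ) (hi : i < n) :
      p ^ (2 * i + 1) * (1 + x * (p ^ 2) ^ (n - 1 - i)) = u * (1 + u⁻¹ * p ^ (2 * i + 1)) := by
    have hp1 : p ^ (2 * i + 1) * (p ^ (1 - 2 * n : ℤ) * (p ^ 2) ^ (n - 1 - i)) = 1 := by
      simp only [← zpow_natCast, ← zpow_mul, ← zpow_add₀ hp]
      convert zpow_zero p
      push_cast [Nat.sub_sub, Nat.cast_sub (by omega : 1 + i ≤ n)]
      ring
    field_simp
    linear_combination u * hp1
  have hterm (k : ℕ) : p ^ (n ^ 2) * ((p ^ 2) ^ k.choose 2 * x ^ k) =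
      u ^ n * (p ^ (((k : ℤ) - n) ^ 2) * u ^ ((k : ℤ) - n)) := by
    have hu' : u ^ k = u ^ n * u ^ ((k : ℤ) - n) := by
      rw [← zpow_natCast, ← zpow_natCast u n, ← zpow_add₀ hu]
      congr 1
      ring
    have hp' : p ^ (n ^ 2) * ((p ^ 2) ^ k.choose 2 * (p ^ (1 - 2 * n : ℤ)) ^ k) =
        p ^ (((k : ℤ) - n) ^ 2) := by
      simp only [← zpow_natCast, ← zpow_mul, ← zpow_add₀ hp]
      congr 1
      push_cast
      linear_combination two_mul_choose_two k
    rw [mul_pow, hu']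
    linear_combination (u ^ n * u ^ ((k : ℤ) - n)) * hp'
  have hprod : p ^ (n ^ 2) * ∏ j ∈ range (2 * n), (1 + x * (p ^ 2) ^ j) =
      u ^ n * ∏ i ∈ range n, ((1 + u * p ^ (2 * i + 1)) * (1 + u⁻¹ * p ^ (2 * i + 1))) := by
    rw [two_mul, prod_range_add, ← prod_range_reflect _ n, ← prod_range_pow_two_mul_add_one,
      ← mul_assoc, ← prod_mul_distrib, prod_congr rfl fun i hi => hlower i (mem_range.1 hi),
      prod_congr rfl fun i _ => hupper i, prod_mul_distrib, prod_const, card_range,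
      prod_mul_distrib]
    ring
  have hsum : p ^ (n ^ 2) *
        ∑ k ∈ range (2 * n + 1), (p ^ 2) ^ k.choose 2 * gaussBinom (p ^ 2) (2 * n) k * x ^ k =
      u ^ n * ∑ k ∈ range (2 * n + 1),
        gaussBinom (p ^ 2) (2 * n) k * (p ^ (((k : ℤ) - n) ^ 2) * u ^ ((k : ℤ) - n)) := by
    simp only [mul_sum]
    refine sum_congr rfl fun k _ => ?_
    linear_combination gaussBinom (p ^ 2) (2 * n) k * hterm k
  refine mul_left_cancel₀ (pow_ne_zero n hu) ?_
  rw [← hprod, ← hsum, prod_one_add_mul_pow_eq_sum_gaussBinom hp2]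

end Field

lemma tsum_ite_mem_Icc_eq_sum_range {M : Type*} [AddCommMonoid M] [TopologicalSpace M]
    (g : ℤ → M) (n : ℕ) :
    ∑' j : ℤ, (if j ∈ Icc (-(n : ℤ)) n then g j else 0) = ∑ k ∈ range (2 * n + 1), g (k - n) := by
  rw [tsum_eq_sum fun j hj => if_neg hj, sum_congr rfl fun j hj => if_pos hj]
  refine sum_nbij' (fun j => (j + n).toNat) (fun k => k - n) ?_ ?_ ?_ ?_ ?_ <;> intro a ha <;>
    simp only [mem_Icc, mem_range] at ha ⊢
  all_goals first | omega | (congr 1; omega)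

lemma summable_pow_sq_mul_pow {a : ℝ} (ha0 : 0 ≤ a) (ha : a < 1) (c : ℝ) :
    Summable fun k : ℕ => a ^ (k ^ 2) * c ^ k := by
  have hsmall : ∀ᶠ k : ℕ in atTop, a ^ k * |c| ≤ 1 / 2 := by
    have := (tendsto_pow_atTop_nhds_zero_of_lt_one ha0 ha).mul_const |c|
    rw [zero_mul] at this
    exact this.eventually_le_const one_half_pos
  refine summable_geometric_two.of_norm_bounded_eventually_nat ?_
  filter_upwards [hsmall] with k hk
  calc ‖a ^ (k ^ 2) * c ^ k‖ = (a ^ k * |c|) ^ k := by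
        rw [norm_mul, norm_pow, norm_pow, Real.norm_eq_abs, Real.norm_eq_abs, abs_of_nonneg ha0,
          mul_pow, ← pow_mul, sq]
    _ ≤ (1 / 2) ^ k := pow_le_pow_left₀ (by positivity) hk k

lemma summable_norm_zpow_sq_mul_zpow {𝕜 : Type*} [NormedDivisionRing 𝕜] {p : 𝕜} (hp : ‖p‖ < 1)
    (u : 𝕜) :
    Summable fun j : ℤ => ‖p ^ (j ^ 2) * u ^ j‖ := by
  have h (v : 𝕜) : Summable fun k : ℕ => ‖p‖ ^ (k ^ 2) * ‖v‖ ^ k :=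
    summable_pow_sq_mul_pow (norm_nonneg p) hp _
  refine .of_nat_of_neg ((h u).congr fun k => ?_) ((h u⁻¹).congr fun k => ?_)
  · rw [← Nat.cast_pow, zpow_natCast, zpow_natCast, norm_mul, norm_pow, norm_pow]
  · rw [neg_sq, ← Nat.cast_pow, zpow_natCast, zpow_neg, ← inv_zpow, zpow_natCast, norm_mul,
      norm_pow, norm_pow]

lemma pow_succ_ne_one_of_norm_lt_one {𝕜 : Type*} [NormedDivisionRing 𝕜] {q : 𝕜} (hq : ‖q‖ < 1) (n : ℕ) : q ^ (n + 1) ≠ 1 := by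
  intro h
  have := congrArg norm h
  rw [norm_pow, norm_one] at this
  exact (pow_lt_one₀ (norm_nonneg q) hq n.succ_ne_zero).ne this

lemma tendsto_qPochhammer {q : ℂ} (hq : ‖q‖ < 1) :
    Tendsto (qPochhammer q) atTop (𝓝 (∏' i : ℕ, (1 - q ^ (i + 1)))) :=
  (ModularForm.multipliable_one_sub_pow hq).hasProd.tendsto_prod_nat

lemma tprod_one_sub_pow_ne_zero {q : ℂ} (hq : ‖q‖ < 1) : ∏' i : ℕ, (1 - q ^ (i + 1)) ≠ 0 := by
  simp only [sub_eq_add_neg]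
  refine tprod_one_add_ne_zero_of_summable (fun i => ?_) ?_
  · rw [← sub_eq_add_neg]
    exact sub_ne_zero.2 (pow_succ_ne_one_of_norm_lt_one hq i).symm
  · simpa using (summable_nat_add_iff 1).mpr (summable_geometric_of_lt_one (norm_nonneg _) hq)

lemma exists_norm_gaussBinom_le {q : ℂ} (hq : ‖q‖ < 1) : ∃ C, ∀ n k, ‖gaussBinom q n k‖ ≤ C := by
  -- `qPochhammer q n` converges to a nonzero limit, so it is bounded above and away from `0`
  have hF := tendsto_qPochhammer hq
  obtain ⟨A, hA⟩ := isBounded_iff_forall_norm_le.1 (Metric.isBounded_range_of_tendsto _ hF)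
  obtain ⟨A', hA'⟩ := isBounded_iff_forall_norm_le.1
    (Metric.isBounded_range_of_tendsto _ (hF.inv₀ (tprod_one_sub_pow_ne_zero hq)))
  have hA0 : 0 ≤ A := (norm_nonneg _).trans (hA _ ⟨0, rfl⟩)
  have hA'0 : 0 ≤ A' := (norm_nonneg _).trans (hA' _ ⟨0, rfl⟩)
  refine ⟨A * (A' * A'), fun n k => ?_⟩
  unfold gaussBinom
  split_ifs
  · rw [div_eq_mul_inv, mul_inv, norm_mul, norm_mul]
    exact mul_le_mul (hA _ ⟨n, rfl⟩) (mul_le_mul (hA' _ ⟨k, rfl⟩) (hA' _ ⟨n - k, rfl⟩)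
      (norm_nonneg _) hA'0) (by positivity) hA0
  · rw [norm_zero]
    positivity

lemma tendsto_gaussBinom_central {q : ℂ} (hq : ‖q‖ < 1) (j : ℤ) :
    Tendsto (fun n : ℕ => gaussBinom q (2 * n) (j + n).toNat) atTop
      (𝓝 (∏' i : ℕ, (1 - q ^ (i + 1)))⁻¹) := by
  have hL := tprod_one_sub_pow_ne_zero hq
  have hF := tendsto_qPochhammer hq
  have hshift (g : ℕ → ℕ) (hg : ∀ n, n - j.natAbs ≤ g n) : Tendsto g atTop atTop :=
    tendsto_atTop_mono hg (tendsto_sub_atTop_nat _)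
  have hlim := (hF.comp (hshift (2 * ·) fun n => by omega)).div
    ((hF.comp (hshift (fun n => (j + n).toNat) fun n => by omega)).mul
      (hF.comp (hshift (fun n => 2 * n - (j + n).toNat) fun n => by omega))) (mul_ne_zero hL hL)
  rw [div_mul_cancel_left₀ hL] at hlim
  refine hlim.congr' ?_
  filter_upwards [eventually_ge_atTop j.natAbs] with n hn
  exact (if_pos (by omega)).symm

lemma multipliable_one_add_mul_pow_two_mul_add_one {p : ℂ} (hp : ‖p‖ < 1) (v : ℂ) :
    Multipliable fun m : ℕ => 1 + v * p ^ (2 * m + 1) := by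
  refine Complex.multipliable_one_add_of_summable ?_
  have hp2 : ‖p ^ 2‖ < 1 := by
    rw [norm_pow]
    exact pow_lt_one₀ (norm_nonneg p) hp two_ne_zero
  refine ((summable_geometric_of_norm_lt_one hp2).mul_left (v * p)).congr fun m => ?_
  ring

theorem jacobi_triple_product {p u : ℂ} (hp0 : p ≠ 0) (hp : ‖p‖ < 1) (hu : u ≠ 0) :
    ∑' j : ℤ, p ^ (j ^ 2) * u ^ j = ∏' m : ℕ,
      ((1 - (p ^ 2) ^ (m + 1)) * (1 + u * p ^ (2 * m + 1)) * (1 + u⁻¹ * p ^ (2 * m + 1))) := by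
  have hq : ‖p ^ 2‖ < 1 := by
    rw [norm_pow]
    exact pow_lt_one₀ (norm_nonneg p) hp two_ne_zero
  set L := ∏' i : ℕ, (1 - (p ^ 2) ^ (i + 1))
  have hodd : Multipliable fun m : ℕ => (1 + u * p ^ (2 * m + 1)) * (1 + u⁻¹ * p ^ (2 * m + 1)) :=
    (multipliable_one_add_mul_pow_two_mul_add_one hp u).mul
      (multipliable_one_add_mul_pow_two_mul_add_one hp u⁻¹)
  let f (n : ℕ) (j : ℤ) : ℂ := if j ∈ Icc (-(n : ℤ)) n then
    gaussBinom (p ^ 2) (2 * n) (j + n).toNat * (p ^ (j ^ 2) * u ^ j) else 0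
  have hf (n : ℕ) : ∑' j, f n j =
      ∏ i ∈ range n, ((1 + u * p ^ (2 * i + 1)) * (1 + u⁻¹ * p ^ (2 * i + 1))) := by
    rw [jacobi_triple_product_finite hp0 (pow_succ_ne_one_of_norm_lt_one hq) hu,
      tsum_ite_mem_Icc_eq_sum_range]
    refine sum_congr rfl fun k _ => ?_
    rw [sub_add_cancel, Int.toNat_natCast]
  obtain ⟨C, hC⟩ := exists_norm_gaussBinom_le hq
  -- Tannery's theorem, dominated by `C * ‖p ^ (j ^ 2) * u ^ j‖`
  have hlim : Tendsto (fun n => ∑' j, f n j) atTop (𝓝 (∑' j : ℤ, L⁻¹ * (p ^ (j ^ 2) * u ^ j))) := by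
    refine tendsto_tsum_of_dominated_convergence ((summable_norm_zpow_sq_mul_zpow hp u).mul_left C)
      (fun j => ?_) (.of_forall fun n j => ?_)
    · refine ((tendsto_gaussBinom_central hq j).mul_const _).congr' ?_
      filter_upwards [eventually_ge_atTop j.natAbs] with n hn
      exact (if_pos (mem_Icc.2 (by omega))).symm
    · simp only [f]
      split_ifs
      · rw [norm_mul]
        exact mul_le_mul_of_nonneg_right (hC _ _) (norm_nonneg _)
      · rw [norm_zero]
        exact mul_nonneg ((norm_nonneg _).trans (hC 0 0)) (norm_nonneg _)
  simp only [hf] at hlim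
  have heq := tendsto_nhds_unique hlim hodd.hasProd.tendsto_prod_nat
  rw [tsum_mul_left] at heq
  rw [tprod_congr fun m => mul_assoc _ _ _,
    (ModularForm.multipliable_one_sub_pow hq).tprod_mul hodd, ← heq,
    mul_inv_cancel_left₀ (tprod_one_sub_pow_ne_zero hq)]

theorem jacobi_triple_product_shifted_general (r : ℚ) (τ σ : ℂ) (hτ : 0 < τ.im) :
    (∑' k : ℤ, Complex.exp ((Real.pi : ℂ) * Complex.I * ((k : ℂ) + (r : ℂ)) ^ 2 * τ +
        2 * (Real.pi : ℂ) * Complex.I * ((k : ℂ) + (r : ℂ)) * σ)) =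
      Complex.exp (2 * (Real.pi : ℂ) * Complex.I * (r : ℂ) * σ) *
        Complex.exp ((Real.pi : ℂ) * Complex.I * (r : ℂ) ^ 2 * τ) *
        ∏' m : ℕ,
          ((1 - Complex.exp (2 * (Real.pi : ℂ) * Complex.I * τ) ^ (m + 1)) *
            (1 + Complex.exp (2 * (Real.pi : ℂ) * Complex.I * σ) *
              Complex.exp (2 * (Real.pi : ℂ) * Complex.I *
                (((m : ℂ) + 1) + (r : ℂ) - 1/2) * τ)) *
            (1 + (Complex.exp (2 * (Real.pi : ℂ) * Complex.I * σ))⁻¹ *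
              Complex.exp (2 * (Real.pi : ℂ) * Complex.I *
                (((m : ℂ) + 1) - (r : ℂ) - 1/2) * τ))) := by
  set p := Complex.exp (Real.pi * Complex.I * τ)
  set u := Complex.exp (2 * Real.pi * Complex.I * (σ + r * τ))
  have hp : ‖p‖ < 1 := by
    rw [Complex.norm_exp, Real.exp_lt_one_iff]
    simpa [Complex.mul_re] using mul_pos Real.pi_pos hτ
  calc _ = ∑' k : ℤ, Complex.exp (2 * Real.pi * Complex.I * r * σ) *
          Complex.exp (Real.pi * Complex.I * r ^ 2 * τ) * (p ^ (k ^ 2) * u ^ k) := by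
        refine tsum_congr fun k => ?_
        simp only [p, u, ← Complex.exp_int_mul, ← Complex.exp_add]
        congr 1
        push_cast
        ring
    _ = _ := by
        rw [tsum_mul_left, jacobi_triple_product (Complex.exp_ne_zero _) hp (Complex.exp_ne_zero _)]
        congr 1
        refine tprod_congr fun m => ?_
        simp only [← Complex.exp_nat_mul, ← Complex.exp_neg, ← Complex.exp_add]
        congr 3 <;> push_cast <;> ring_nf

/-- Jacobi triple product, shifted form: for `r ∈ ℚ`, `r ≠ 1/2`
(with `-1/2 < r < 1/2` ensuring absolute convergence), `q = e^{2πiτ}` with `Im τ > 0`,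
`z = e^{2πiσ}`:
`∑_{m∈ℤ+r} q^{m²/2} z^m
  = z^r q^{r²/2} ∏_{m>0} (1-qᵐ)(1+z q^{m+r-1/2})(1+z⁻¹ q^{m-r-1/2})`,
where fractional powers of `q` and `z` are taken via the exponential parametrization. -/
theorem jacobi_triple_product_shifted (r : ℚ) (hr : r ≠ 1/2)
    (hr1 : -(1/2 : ℚ) < r) (hr2 : r < 1/2) (τ σ : ℂ) (hτ : 0 < τ.im) :
    (∑' k : ℤ, Complex.exp ((Real.pi : ℂ) * Complex.I * ((k : ℂ) + (r : ℂ)) ^ 2 * τ +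
        2 * (Real.pi : ℂ) * Complex.I * ((k : ℂ) + (r : ℂ)) * σ)) =
      Complex.exp (2 * (Real.pi : ℂ) * Complex.I * (r : ℂ) * σ) *
        Complex.exp ((Real.pi : ℂ) * Complex.I * (r : ℂ) ^ 2 * τ) *
        ∏' m : ℕ,
          ((1 - Complex.exp (2 * (Real.pi : ℂ) * Complex.I * τ) ^ (m + 1)) *
            (1 + Complex.exp (2 * (Real.pi : ℂ) * Complex.I * σ) *
              Complex.exp (2 * (Real.pi : ℂ) * Complex.I *
                (((m : ℂ) + 1) + (r : ℂ) - 1/2) * τ)) *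
            (1 + (Complex.exp (2 * (Real.pi : ℂ) * Complex.I * σ))⁻¹ *
              Complex.exp (2 * (Real.pi : ℂ) * Complex.I *
                (((m : ℂ) + 1) - (r : ℂ) - 1/2) * τ))) :=
  jacobi_triple_product_shifted_general r τ σ hτ
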